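/- Let d ≥ 3, let p ∈ ℝ^d, and let ρ ≥ |p|/2. Then there exist k, l ∈ ℂ^d such that k² = Σ_{j=1}^d k_j² = 0, l² = Σ_{j=1}^d l_j² = 0, k − l = p, Im k = Im l, and |Im k| = |Im l| = ρ. -/

import Mathlib

open RealInnerProductSpace

noncomputable section

lemma key_sum_sq (d : ℕ) (a b : Fin d → ℝ) (h1 : ∑ j, a j ^ 2 = ∑ j, b j ^ 2)
    (h2 : ∑ j, a j * b j = 0) :
    ∑ j, ((a j : ℂ) + (b j : ℂ) * Complex.I) ^ 2 = 0 := by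
  have hterm : ∀ j, ((a j : ℂ) + (b j : ℂ) * Complex.I) ^ 2 =
      ((a j ^ 2 - b j ^ 2 : ℝ) : ℂ) + ((2 * (a j * b j) : ℝ) : ℂ) * Complex.I := by
    intro j
    push_cast
    ring_nf
    simp [Complex.I_sq]
    ring
  rw [Finset.sum_congr rfl (fun j _ => hterm j)]
  rw [Complex.ext_iff]
  constructor
  · simp [Complex.re_sum, ← Complex.ofReal_pow, Finset.sum_sub_distrib, h1]
  · simp [Complex.im_sum, ← Complex.ofReal_pow, ← Finset.mul_sum, h2]

lemma sum_sq_eq_norm_sq (d : ℕ) (x : EuclideanSpace ℝ (Fin d)) :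
    ∑ j, x j ^ 2 = ‖x‖ ^ 2 := by
  rw [EuclideanSpace.norm_eq, Real.sq_sqrt (by positivity)]
  simp [sq_abs]

lemma inner_eq_sum (d : ℕ) (x y : EuclideanSpace ℝ (Fin d)) :
    ⟪x, y⟫ = ∑ j, x j * y j := by
  simp [PiLp.inner_apply, RCLike.inner_apply]
  exact Finset.sum_congr rfl (fun j _ => mul_comm _ _)

/-- for `d ≥ 3`, `p ∈ ℝ^d` and `ρ ≥ |p|/2`, there exist `k, l ∈ ℂ^d`
with `k² = l² = 0`, `k - l = p`, `Im k = Im l` and `|Im k| = |Im l| = ρ`. -/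
theorem stmt_11 (d : ℕ) (hd : 3 ≤ d) (p : EuclideanSpace ℝ (Fin d))
    (ρ : ℝ) (hρ : ‖p‖ / 2 ≤ ρ) :
    ∃ k l : Fin d → ℂ,
      (∑ j, k j ^ 2 = 0) ∧ (∑ j, l j ^ 2 = 0) ∧
        (∀ j, k j - l j = (p j : ℂ)) ∧
        (∀ j, (k j).im = (l j).im) ∧
        Real.sqrt (∑ j, (k j).im ^ 2) = ρ ∧
        Real.sqrt (∑ j, (l j).im ^ 2) = ρ := by
  have hρ0 : 0 ≤ ρ := le_trans (by positivity) hρ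
  set K : Submodule ℝ (EuclideanSpace ℝ (Fin d)) := (ℝ ∙ p)ᗮ with hK
  have hrank : 2 ≤ Module.finrank ℝ K := by
    have h1 : Module.finrank ℝ (ℝ ∙ p) + Module.finrank ℝ K = d := by
      rw [hK, Submodule.finrank_add_finrank_orthogonal]
      simp
    have h2 : Module.finrank ℝ (ℝ ∙ p) ≤ 1 :=
      (finrank_span_le_card ({p} : Set (EuclideanSpace ℝ (Fin d)))).trans (by simp)
    omega
  set b := stdOrthonormalBasis ℝ K with hb
  set ξ : EuclideanSpace ℝ (Fin d) := ((b ⟨0, by omega⟩ : K) : EuclideanSpace ℝ (Fin d)) with hξ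
  set η : EuclideanSpace ℝ (Fin d) := ((b ⟨1, by omega⟩ : K) : EuclideanSpace ℝ (Fin d)) with hη
  have hon := b.orthonormal
  have hξn : ∑ j, ξ j ^ 2 = 1 := by
    rw [sum_sq_eq_norm_sq, hξ, Submodule.norm_coe, hon.1 ⟨0, by omega⟩, one_pow]
  have hηn : ∑ j, η j ^ 2 = 1 := by
    rw [sum_sq_eq_norm_sq, hη, Submodule.norm_coe, hon.1 ⟨1, by omega⟩, one_pow]
  have hξη : ∑ j, ξ j * η j = 0 := by
    rw [← inner_eq_sum, hξ, hη, ← Submodule.coe_inner]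
    exact hon.2 (by simp)
  have hpmem : ∀ x : K, ⟪p, (x : EuclideanSpace ℝ (Fin d))⟫ = 0 := fun x =>
    Submodule.mem_orthogonal_singleton_iff_inner_right.mp x.2
  have hpξ : ∑ j, p j * ξ j = 0 := by
    rw [← inner_eq_sum]; exact hpmem _
  have hpη : ∑ j, p j * η j = 0 := by
    rw [← inner_eq_sum]; exact hpmem _
  set s : ℝ := Real.sqrt (ρ ^ 2 - ‖p‖ ^ 2 / 4) with hs
  have hs2 : s ^ 2 = ρ ^ 2 - ‖p‖ ^ 2 / 4 := by
    rw [hs, Real.sq_sqrt]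
    nlinarith [norm_nonneg p]
  have hpn : ∑ j, p j ^ 2 = ‖p‖ ^ 2 := sum_sq_eq_norm_sq d p
  -- define the real and imaginary parts
  set A : Fin d → ℝ := fun j => p j / 2 + s * ξ j with hA
  set A' : Fin d → ℝ := fun j => -(p j / 2) + s * ξ j with hA'
  set B : Fin d → ℝ := fun j => ρ * η j with hB
  have hBsq : ∑ j, B j ^ 2 = ρ ^ 2 := by
    simp only [hB, mul_pow, ← Finset.mul_sum, hηn, mul_one]
  have hAsq : ∑ j, A j ^ 2 = ρ ^ 2 := by
    have : ∀ j, A j ^ 2 = p j ^ 2 / 4 + s ^ 2 * ξ j ^ 2 + s * (p j * ξ j) := by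
      intro j; simp only [hA]; ring
    rw [Finset.sum_congr rfl (fun j _ => this j)]
    rw [Finset.sum_add_distrib, Finset.sum_add_distrib, ← Finset.mul_sum, ← Finset.mul_sum]
    have h4 : ∑ j, p j ^ 2 / 4 = ‖p‖ ^ 2 / 4 := by
      rw [← hpn, ← Finset.sum_div]
    rw [h4, hξn, hpξ, mul_one, mul_zero, add_zero, hs2]; ring
  have hA'sq : ∑ j, A' j ^ 2 = ρ ^ 2 := by
    have : ∀ j, A' j ^ 2 = p j ^ 2 / 4 + s ^ 2 * ξ j ^ 2 - s * (p j * ξ j) := by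
      intro j; simp only [hA']; ring
    rw [Finset.sum_congr rfl (fun j _ => this j)]
    rw [Finset.sum_sub_distrib, Finset.sum_add_distrib, ← Finset.mul_sum, ← Finset.mul_sum]
    have h4 : ∑ j, p j ^ 2 / 4 = ‖p‖ ^ 2 / 4 := by
      rw [← hpn, ← Finset.sum_div]
    rw [h4, hξn, hpξ, mul_one, mul_zero, sub_zero, hs2]; ring
  have hAB : ∑ j, A j * B j = 0 := by
    have : ∀ j, A j * B j = (ρ / 2) * (p j * η j) + (ρ * s) * (ξ j * η j) := by
      intro j; simp only [hA, hB]; ring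
    rw [Finset.sum_congr rfl (fun j _ => this j), Finset.sum_add_distrib,
      ← Finset.mul_sum, ← Finset.mul_sum, hpη, hξη]
    ring
  have hA'B : ∑ j, A' j * B j = 0 := by
    have : ∀ j, A' j * B j = (-(ρ / 2)) * (p j * η j) + (ρ * s) * (ξ j * η j) := by
      intro j; simp only [hA', hB]; ring
    rw [Finset.sum_congr rfl (fun j _ => this j), Finset.sum_add_distrib,
      ← Finset.mul_sum, ← Finset.mul_sum, hpη, hξη]
    ring
  refine ⟨fun j => (A j : ℂ) + (B j : ℂ) * Complex.I,
    fun j => (A' j : ℂ) + (B j : ℂ) * Complex.I,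
    key_sum_sq d A B (by rw [hAsq, hBsq]) hAB,
    key_sum_sq d A' B (by rw [hA'sq, hBsq]) hA'B,
    ?_, ?_, ?_, ?_⟩
  · intro j
    simp only [hA, hA']
    push_cast
    ring
  · intro j
    simp
  · have : ∀ j, (((A j : ℂ) + (B j : ℂ) * Complex.I)).im = B j := by
      intro j; simp
    rw [Finset.sum_congr rfl (fun j _ => by rw [this j]), hBsq]
    exact Real.sqrt_sq hρ0
  · have : ∀ j, (((A' j : ℂ) + (B j : ℂ) * Complex.I)).im = B j := by
      intro j; simp
    rw [Finset.sum_congr rfl (fun j _ => by rw [this j]), hBsq]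
    exact Real.sqrt_sq hρ0
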